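/- Let m be a positive integer, let π be an alternating permutation of [2m] with exactly m fixed points, for each j ∈ [m] let b_j denote the unique element of {2j-1, 2j} not fixed by π, and let σ be the derangement of [m] defined by π(b_j) = b_{σ(j)}. Then for each j ∈ [m]: if σ(j) > j, then b_j = 2j-1 and π(2j) = 2j; and if σ(j) < j, then b_j = 2j and π(2j-1) = 2j-1. Consequently, σ determines π uniquely. -/
import Mathlib


/-- `π` is an alternating permutation: `π 1 > π 2 < π 3 > π 4 < ⋯`
(here stated with 0-indexed positions). -/
def IsAlternating {n : ℕ} (π : Equiv.Perm (Fin n)) : Prop :=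
  ∀ i : ℕ, ∀ h : i + 1 < n,
    if i % 2 = 0 then π ⟨i + 1, h⟩ < π ⟨i, Nat.lt_of_succ_lt h⟩
    else π ⟨i, Nat.lt_of_succ_lt h⟩ < π ⟨i + 1, h⟩

/-- `π` is a reverse alternating permutation: `π 1 < π 2 > π 3 < π 4 > ⋯`
(here stated with 0-indexed positions). -/
def IsRevAlternating {n : ℕ} (π : Equiv.Perm (Fin n)) : Prop :=
  ∀ i : ℕ, ∀ h : i + 1 < n,
    if i % 2 = 0 then π ⟨i, Nat.lt_of_succ_lt h⟩ < π ⟨i + 1, h⟩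
    else π ⟨i + 1, h⟩ < π ⟨i, Nat.lt_of_succ_lt h⟩

/-- The number of fixed points of a permutation of `Fin n`. -/
def fixedPointCount {n : ℕ} (π : Equiv.Perm (Fin n)) : ℕ :=
  (Finset.univ.filter fun i => π i = i).card

/-- For `j ∈ [m]` (0-indexed `j : Fin m`), the 0-indexed position of `2j-1 ∈ [2m]`
(1-indexed), i.e. the smaller element of the pair `I_j = {2j-1, 2j}`. -/
def pairLow {m : ℕ} (j : Fin m) : Fin (2 * m) :=
  ⟨2 * j.val, by have := j.isLt; omega⟩

/-- For `j ∈ [m]` (0-indexed `j : Fin m`), the 0-indexed position of `2j ∈ [2m]`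
(1-indexed), i.e. the larger element of the pair `I_j = {2j-1, 2j}`. -/
def pairHigh {m : ℕ} (j : Fin m) : Fin (2 * m) :=
  ⟨2 * j.val + 1, by have := j.isLt; omega⟩

/-- `b_j`: the element of the pair `I_j = {2j-1, 2j}` that is not fixed by `π`
(assuming exactly one of them is fixed, this is the moved one). -/
def movedPoint {m : ℕ} (π : Equiv.Perm (Fin (2 * m))) (j : Fin m) : Fin (2 * m) :=
  if π (pairLow j) = pairLow j then pairHigh j else pairLow j

lemma alt_pair {m : ℕ} (π : Equiv.Perm (Fin (2 * m))) (hπ : IsAlternating π) (j : Fin m) :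
    π (pairHigh j) < π (pairLow j) := by
  have hj := j.isLt
  have h := hπ (2 * j.val) (by omega)
  rw [if_pos (by omega)] at h
  exact h

lemma notBoth {m : ℕ} (π : Equiv.Perm (Fin (2 * m))) (hπ : IsAlternating π) (j : Fin m) :
    ¬(π (pairLow j) = pairLow j ∧ π (pairHigh j) = pairHigh j) := by
  rintro ⟨h1, h2⟩
  have h := alt_pair π hπ j
  rw [h1, h2, Fin.lt_def] at h
  simp [pairLow, pairHigh] at h

lemma exists_fixed {m : ℕ} (π : Equiv.Perm (Fin (2 * m))) (hπ : IsAlternating π)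
    (hfix : fixedPointCount π = m) (j : Fin m) :
    π (pairLow j) = pairLow j ∨ π (pairHigh j) = pairHigh j := by
  classical
  set F := Finset.univ.filter fun i : Fin (2 * m) => π i = i with hF
  have hcard : F.card = m := hfix
  have hm2 : ∀ i : Fin (2 * m), i.val / 2 < m := fun i => by have := i.isLt; omega
  set f : Fin (2 * m) → Fin m := fun i => ⟨i.val / 2, hm2 i⟩ with hf
  have hinj : Set.InjOn f F := by
    intro i hi i' hi' he
    have hv : i.val / 2 = i'.val / 2 := congrArg Fin.val he
    have hfi : π i = i := (Finset.mem_filter.mp hi).2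
    have hfi' : π i' = i' := (Finset.mem_filter.mp hi').2
    by_contra hne
    have hne' : i.val ≠ i'.val := fun h => hne (Fin.ext h)
    have key : (i.val = 2 * (i.val / 2) ∧ i'.val = 2 * (i.val / 2) + 1) ∨
        (i'.val = 2 * (i.val / 2) ∧ i.val = 2 * (i.val / 2) + 1) := by omega
    set k : Fin m := ⟨i.val / 2, hm2 i⟩ with hk
    rcases key with ⟨h1, h2⟩ | ⟨h1, h2⟩
    · exact notBoth π hπ k ⟨by rwa [show pairLow k = i from Fin.ext h1.symm],
        by rwa [show pairHigh k = i' from Fin.ext h2.symm]⟩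
    · exact notBoth π hπ k ⟨by rwa [show pairLow k = i' from Fin.ext h1.symm],
        by rwa [show pairHigh k = i from Fin.ext h2.symm]⟩
  have himg : (F.image f).card = m := by rw [Finset.card_image_of_injOn hinj, hcard]
  have huniv : F.image f = Finset.univ := Finset.eq_univ_of_card _ (by simp [himg])
  have hjmem : j ∈ F.image f := huniv ▸ Finset.mem_univ j
  obtain ⟨i, hiF, hij⟩ := Finset.mem_image.mp hjmem
  have hfi : π i = i := (Finset.mem_filter.mp hiF).2
  have hv : i.val / 2 = j.val := congrArg Fin.val hij
  have : i.val = 2 * j.val ∨ i.val = 2 * j.val + 1 := by omega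
  rcases this with h | h
  · left; rwa [show pairLow j = i from Fin.ext h.symm]
  · right; rwa [show pairHigh j = i from Fin.ext h.symm]

lemma movedPoint_val {m : ℕ} (π : Equiv.Perm (Fin (2 * m))) (j : Fin m) :
    (movedPoint π j).val = 2 * j.val ∨ (movedPoint π j).val = 2 * j.val + 1 := by
  unfold movedPoint
  split <;> simp [pairLow, pairHigh]

lemma key_lemma {m : ℕ} (π : Equiv.Perm (Fin (2 * m))) (hπ : IsAlternating π)
    (hfix : fixedPointCount π = m)
    (σ : Equiv.Perm (Fin m)) (hσ : ∀ x, σ x ≠ x)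
    (hdef : ∀ j : Fin m, π (movedPoint π j) = movedPoint π (σ j)) (j : Fin m) :
    (j < σ j → movedPoint π j = pairLow j ∧ π (pairHigh j) = pairHigh j) ∧
    (σ j < j → movedPoint π j = pairHigh j ∧ π (pairLow j) = pairLow j) := by
  constructor
  · intro hlt
    have hnl : π (pairLow j) ≠ pairLow j := by
      intro hl
      have hmp : movedPoint π j = pairHigh j := by rw [movedPoint, if_pos hl]
      have hd := hdef j
      rw [hmp] at hd
      have halt := alt_pair π hπ j
      rw [hd, hl, Fin.lt_def] at halt
      have hv := movedPoint_val π (σ j)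
      have : (j : ℕ) < (σ j : ℕ) := hlt
      simp only [pairLow] at halt
      omega
    have hmp : movedPoint π j = pairLow j := by rw [movedPoint, if_neg hnl]
    exact ⟨hmp, (exists_fixed π hπ hfix j).resolve_left hnl⟩
  · intro hlt
    have hl : π (pairLow j) = pairLow j := by
      by_contra hnl
      have hh : π (pairHigh j) = pairHigh j := (exists_fixed π hπ hfix j).resolve_left hnl
      have hmp : movedPoint π j = pairLow j := by rw [movedPoint, if_neg hnl]
      have hd := hdef j
      rw [hmp] at hd
      have halt := alt_pair π hπ j
      rw [hd, hh, Fin.lt_def] at halt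
      have hv := movedPoint_val π (σ j)
      have : (σ j : ℕ) < (j : ℕ) := hlt
      simp only [pairHigh] at halt
      omega
    exact ⟨by rw [movedPoint, if_pos hl], hl⟩

lemma movedPoint_det {m : ℕ} (π : Equiv.Perm (Fin (2 * m))) (hπ : IsAlternating π)
    (hfix : fixedPointCount π = m)
    (σ : Equiv.Perm (Fin m)) (hσ : ∀ x, σ x ≠ x)
    (hdef : ∀ j : Fin m, π (movedPoint π j) = movedPoint π (σ j)) (j : Fin m) :
    movedPoint π j = if j < σ j then pairLow j else pairHigh j := by
  rcases (hσ j).lt_or_gt with h | h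
  · rw [if_neg h.asymm]
    exact ((key_lemma π hπ hfix σ hσ hdef j).2 h).1
  · rw [if_pos h]
    exact ((key_lemma π hπ hfix σ hσ hdef j).1 h).1

/-- With `σ` the derangement induced by an alternating permutation `π` of `[2m]` with exactly
`m` fixed points: if `σ(j) > j` then `b_j = 2j-1` and `π(2j) = 2j`, and if `σ(j) < j` then
`b_j = 2j` and `π(2j-1) = 2j-1`. Consequently `σ` determines `π` uniquely. -/
theorem derangement_determines_alternating (m : ℕ) (hm : 1 ≤ m)
    (π : Equiv.Perm (Fin (2 * m))) (hπ : IsAlternating π)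
    (hfix : fixedPointCount π = m)
    (σ : Equiv.Perm (Fin m)) (hσ : ∀ x, σ x ≠ x)
    (hdef : ∀ j : Fin m, π (movedPoint π j) = movedPoint π (σ j)) :
    (∀ j : Fin m,
      (j < σ j → movedPoint π j = pairLow j ∧ π (pairHigh j) = pairHigh j) ∧
      (σ j < j → movedPoint π j = pairHigh j ∧ π (pairLow j) = pairLow j)) ∧
    ∀ π' : Equiv.Perm (Fin (2 * m)), IsAlternating π' → fixedPointCount π' = m →
      (∀ j : Fin m, π' (movedPoint π' j) = movedPoint π' (σ j)) → π' = π := by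
  refine ⟨key_lemma π hπ hfix σ hσ hdef, ?_⟩
  intro π' hπ' hfix' hdef'
  have hmp : ∀ k : Fin m, movedPoint π' k = movedPoint π k := fun k => by
    rw [movedPoint_det π hπ hfix σ hσ hdef k, movedPoint_det π' hπ' hfix' σ hσ hdef' k]
  apply Equiv.ext
  intro i
  have hm2 : i.val / 2 < m := by have := i.isLt; omega
  set j : Fin m := ⟨i.val / 2, hm2⟩ with hj
  have hij : i = pairLow j ∨ i = pairHigh j := by
    have : i.val = 2 * j.val ∨ i.val = 2 * j.val + 1 := by simp [hj]; omega
    rcases this with h | h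
    · left; exact Fin.ext h
    · right; exact Fin.ext h
  have K := key_lemma π hπ hfix σ hσ hdef j
  have K' := key_lemma π' hπ' hfix' σ hσ hdef' j
  rcases (hσ j).lt_or_gt with h | h
  · rcases hij with hi | hi
    · rw [hi, (K.2 h).2, (K'.2 h).2]
    · have e : pairHigh j = movedPoint π j := ((K.2 h).1).symm
      have e' : pairHigh j = movedPoint π' j := ((K'.2 h).1).symm
      rw [hi, e', hdef' j, hmp, hmp]
      exact (hdef j).symm
  · rcases hij with hi | hi
    · have e' : pairLow j = movedPoint π' j := ((K'.1 h).1).symm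
      rw [hi, e', hdef' j, hmp, hmp]
      exact (hdef j).symm
    · rw [hi, (K.1 h).2, (K'.1 h).2]
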